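/- arXiv:2510.19759 — 2 statements merged into one kernel-verified Lean document; each statement's English description precedes it below -/
import Mathlib

section
/- Fix an index b with 1 ≤ b ≤ N, and assume q_b ≠ t_m for all m = 1,…,N_t. Then the partial derivative of R with respect to the y-coordinate y_b of q_b exists and equals (4πρ/λ) · Im( Σ_{m=1}^{N_t} [C_2(q)(m,b) − C_1(q)(m,b)] · ((y_b − y_{t,m}) / ‖t_m − q_b‖) · exp(i(2π/λ)‖t_m − q_b‖) ), where y_{t,m} denotes the y-coordinate of t_m and C_j(q)(m,b) is the (m,b) entry of C_j(q). -/
/-!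
By Jacobi's formula, `d/dy ln det A = Re tr (A⁻¹ A')`. Since `A = H T Hᴴ + σ² I` with `T`
Hermitian, `A' = X + Xᴴ` for `X = H' T Hᴴ`, so the derivative is
`2 Re tr (X A⁻¹) = 2 Re tr (H' C)`. Moving `q_b` only moves row `b` of `H`, where
`H'_{bm} = H_{bm} · i (2π/λ) (y_b - y_{t,m}) / ‖t_m - q_b‖`; hence
`tr (H' C) = Σ_m H'_{bm} C_{mb}`, and the factor `i` turns the real part into `-Im`.
-/

open Matrix
open scoped ComplexOrder

/-- The near-field channel matrix `H(q) ∈ ℂ^{N×Nt}` with entries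
`H(q)_{b,m} = ρ · exp(i (2π/λ) ‖t_m − q_b‖)`. -/
noncomputable def nearFieldH (lam ρ : ℝ) {N Nt : ℕ}
    (t : Fin Nt → EuclideanSpace ℝ (Fin 3))
    (q : Fin N → EuclideanSpace ℝ (Fin 3)) :
    Matrix (Fin N) (Fin Nt) ℂ :=
  Matrix.of fun b m =>
    (ρ : ℂ) * Complex.exp (Complex.I * ((2 * Real.pi / lam * ‖t m - q b‖ : ℝ) : ℂ))

/-- `A(q) = H(q) T H(q)ᴴ + σ² I`. -/
noncomputable def nearFieldA (lam ρ σ : ℝ) {N Nt : ℕ}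
    (T : Matrix (Fin Nt) (Fin Nt) ℂ)
    (t : Fin Nt → EuclideanSpace ℝ (Fin 3))
    (q : Fin N → EuclideanSpace ℝ (Fin 3)) :
    Matrix (Fin N) (Fin N) ℂ :=
  nearFieldH lam ρ t q * T * (nearFieldH lam ρ t q)ᴴ + ((σ ^ 2 : ℝ) : ℂ) • 1

/-- `C(q) = T H(q)ᴴ A(q)⁻¹`. -/
noncomputable def nearFieldC (lam ρ σ : ℝ) {N Nt : ℕ}
    (T : Matrix (Fin Nt) (Fin Nt) ℂ)
    (t : Fin Nt → EuclideanSpace ℝ (Fin 3))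
    (q : Fin N → EuclideanSpace ℝ (Fin 3)) :
    Matrix (Fin Nt) (Fin N) ℂ :=
  T * (nearFieldH lam ρ t q)ᴴ * (nearFieldA lam ρ σ T t q)⁻¹

/-- `R(q) = ln det A₁(q) − ln det A₂(q)` (the determinants are real and positive). -/
noncomputable def nearFieldR (lam ρ σ : ℝ) {N Nt : ℕ}
    (T1 T2 : Matrix (Fin Nt) (Fin Nt) ℂ)
    (t : Fin Nt → EuclideanSpace ℝ (Fin 3))
    (q : Fin N → EuclideanSpace ℝ (Fin 3)) : ℝ :=
  Real.log ((nearFieldA lam ρ σ T1 t q).det.re)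
    - Real.log ((nearFieldA lam ρ σ T2 t q).det.re)

theorem Matrix.adjugate_eq_det_smul_inv {n K : Type*} [Fintype n] [DecidableEq n] [Field K]
    {A : Matrix n n K} (hA : A.det ≠ 0) : adjugate A = A.det • A⁻¹ := by
  rw [inv_def, Ring.inverse_eq_inv', smul_smul, mul_inv_cancel₀ hA, one_smul]

theorem Matrix.sum_det_updateCol_eq_trace_adjugate_mul {n R : Type*} [Fintype n] [DecidableEq n]
    [CommRing R] (A M : Matrix n n R) :
    ∑ j, (A.updateCol j fun i => M i j).det = trace (adjugate A * M) := by
  simp only [← cramer_apply, cramer_eq_adjugate_mulVec, trace, diag, mul_apply, mulVec,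
    dotProduct]

theorem Matrix.re_trace_mul_add_conjTranspose {n : Type*} [Fintype n] {S X : Matrix n n ℂ}
    (hS : S.IsHermitian) : (trace (S * (X + Xᴴ))).re = 2 * (trace (X * S)).re := by
  have hconj : trace (S * Xᴴ) = star (trace (X * S)) := by
    rw [← trace_conjTranspose, conjTranspose_mul, hS.eq]
  rw [mul_add, trace_add, hconj, trace_mul_comm S X, Complex.add_re, Complex.star_def,
    Complex.conj_re]
  ring

theorem Matrix.trace_of_ite_mul {m n R : Type*} [Fintype m] [Fintype n] [DecidableEq m]
    [NonUnitalNonAssocSemiring R] (b : m) (r : n → R) (M : Matrix n m R) :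
    trace (of (fun i j => if i = b then r j else 0) * M) = ∑ j, r j * M j b := by
  simp [trace, mul_apply, ite_mul]

section EntrywiseCalculus

variable {𝕜 R : Type*} [NontriviallyNormedField 𝕜] {l m n : Type*}

def Matrix.HasDerivAtEntrywise [NormedAddCommGroup R] [NormedSpace 𝕜 R]
    (A : 𝕜 → Matrix l m R) (A' : Matrix l m R) (x : 𝕜) : Prop :=
  ∀ i j, HasDerivAt (fun y => A y i j) (A' i j) x

namespace Matrix.HasDerivAtEntrywise

variable {x : 𝕜}

section NormedRing

variable [NormedRing R] [NormedAlgebra 𝕜 R]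

theorem mul_const [Fintype m] {A : 𝕜 → Matrix l m R} {A' : Matrix l m R}
    (hA : HasDerivAtEntrywise A A' x) (B : Matrix m n R) :
    HasDerivAtEntrywise (fun y => A y * B) (A' * B) x := fun i k => by
  simpa only [mul_apply] using HasDerivAt.fun_sum fun j _ => (hA i j).mul_const (B j k)

theorem mul [Fintype m] {A : 𝕜 → Matrix l m R} {A' : Matrix l m R} {B : 𝕜 → Matrix m n R}
    {B' : Matrix m n R} (hA : HasDerivAtEntrywise A A' x) (hB : HasDerivAtEntrywise B B' x) :
    HasDerivAtEntrywise (fun y => A y * B y) (A' * B x + A x * B') x := fun i k => by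
  simpa only [mul_apply, add_apply, ← Finset.sum_add_distrib] using
    HasDerivAt.fun_sum fun j _ => (hA i j).fun_mul (hB j k)

theorem add_const {A : 𝕜 → Matrix l m R} {A' : Matrix l m R}
    (hA : HasDerivAtEntrywise A A' x) (B : Matrix l m R) :
    HasDerivAtEntrywise (fun y => A y + B) A' x := fun i j => by
  simpa only [add_apply] using (hA i j).add_const (B i j)

theorem conjTranspose [StarRing 𝕜] [TrivialStar 𝕜] [StarRing R] [ContinuousStar R]
    [StarModule 𝕜 R] {A : 𝕜 → Matrix l m R} {A' : Matrix l m R}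
    (hA : HasDerivAtEntrywise A A' x) :
    HasDerivAtEntrywise (fun y => (A y)ᴴ) A'ᴴ x := fun i j => (hA j i).star

end NormedRing

theorem det [NormedCommRing R] [NormedAlgebra 𝕜 R] [Fintype n] [DecidableEq n]
    {A : 𝕜 → Matrix n n R} {A' : Matrix n n R} (hA : HasDerivAtEntrywise A A' x) :
    HasDerivAt (fun y => (A y).det) (trace (adjugate (A x) * A')) x := by
  have hLeibniz : HasDerivAt (fun y => (A y).det)
      (∑ σ : Equiv.Perm n, (Equiv.Perm.sign σ : R) *
        ∑ j, (∏ k ∈ Finset.univ.erase j, A x (σ k) k) • A' (σ j) j) x := by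
    simp only [det_apply']
    exact HasDerivAt.fun_sum fun σ _ =>
      (HasDerivAt.fun_finsetProd fun j _ => hA (σ j) j).const_mul _
  refine hLeibniz.congr_deriv ?_
  rw [← sum_det_updateCol_eq_trace_adjugate_mul]
  simp only [det_apply', Finset.mul_sum, smul_eq_mul]
  rw [Finset.sum_comm]
  refine Finset.sum_congr rfl fun j _ => Finset.sum_congr rfl fun σ _ => ?_
  rw [← Finset.mul_prod_erase Finset.univ _ (Finset.mem_univ j), updateCol_self,
    Finset.prod_congr rfl fun k hk => updateCol_ne (Finset.ne_of_mem_erase hk)]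
  ring

theorem log_det_re [Fintype n] [DecidableEq n] {A : ℝ → Matrix n n ℂ} {A' : Matrix n n ℂ}
    {x : ℝ} (hA : HasDerivAtEntrywise A A' x) (hpos : (A x).PosDef) :
    HasDerivAt (fun y => Real.log (A y).det.re) (trace ((A x)⁻¹ * A')).re x := by
  obtain ⟨hre, him⟩ := Complex.lt_def.mp hpos.det_pos
  have hdet_real : (A x).det = ((A x).det.re : ℂ) := Complex.ext rfl (by simpa using him.symm)
  have hlog := (Complex.reCLM.hasFDerivAt.comp_hasDerivAt x hA.det).log hre.ne'
  refine hlog.congr_deriv ?_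
  rw [adjugate_eq_det_smul_inv hpos.det_pos.ne', smul_mul, trace_smul, smul_eq_mul, hdet_real]
  simp only [Function.comp_apply, Complex.reCLM_apply, Complex.re_ofReal_mul]
  exact mul_div_cancel_left₀ _ hre.ne'

end Matrix.HasDerivAtEntrywise

end EntrywiseCalculus

open scoped RealInnerProductSpace in
theorem HasDerivAt.norm_of_ne_zero {F : Type*} [NormedAddCommGroup F] [InnerProductSpace ℝ F]
    {f : ℝ → F} {f' : F} {x : ℝ} (hf : HasDerivAt f f' x) (h0 : f x ≠ 0) :
    HasDerivAt (fun y => ‖f y‖) (⟪f x, f'⟫ / ‖f x‖) x := by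
  have hsqrt := hf.norm_sq.sqrt (by positivity)
  simp only [Real.sqrt_sq (norm_nonneg _)] at hsqrt
  exact hsqrt.congr_deriv (by field_simp)

theorem EuclideanSpace.hasDerivAt_norm_sub_toLp_update {ι : Type*} [Fintype ι] [DecidableEq ι]
    {v w : EuclideanSpace ℝ ι} (hvw : v ≠ w) (k : ι) :
    HasDerivAt (fun x => ‖v - WithLp.toLp 2 (Function.update w k x)‖)
      ((w k - v k) / ‖v - w‖) (w k) := by
  have hpath : HasDerivAt (fun x => WithLp.toLp 2 (Function.update w k x))
      (EuclideanSpace.single k 1) (w k) :=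
    (PiLp.continuousLinearEquiv 2 ℝ _).symm.hasFDerivAt.comp_hasDerivAt _
      (hasDerivAt_update (⇑w) k (w k))
  have hnorm := HasDerivAt.norm_of_ne_zero (hpath.const_sub v) (by simpa [sub_ne_zero] using hvw)
  convert hnorm using 1
  simp [EuclideanSpace.inner_single_right]

section NearField

variable {N Nt : ℕ} (lam ρ : ℝ) (t : Fin Nt → EuclideanSpace ℝ (Fin 3))
  (q : Fin N → EuclideanSpace ℝ (Fin 3))

def updateAntennaCoord (b : Fin N) (k : Fin 3) (x : ℝ) : Fin N → EuclideanSpace ℝ (Fin 3) :=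
  Function.update q b (WithLp.toLp 2 (Function.update (q b) k x))

@[simp]
theorem updateAntennaCoord_self (b : Fin N) (k : Fin 3) :
    updateAntennaCoord q b k (q b k) = q := by
  simp [updateAntennaCoord]

noncomputable def nearFieldHDeriv (b : Fin N) (k : Fin 3) : Matrix (Fin N) (Fin Nt) ℂ :=
  of fun i m => if i = b then
    nearFieldH lam ρ t q b m *
      (Complex.I * ((2 * Real.pi / lam * ((q b k - t m k) / ‖t m - q b‖) : ℝ) : ℂ))
  else 0

theorem hasDerivAtEntrywise_nearFieldH {b : Fin N} (hq : ∀ m, q b ≠ t m) (k : Fin 3) :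
    HasDerivAtEntrywise (fun x => nearFieldH lam ρ t (updateAntennaCoord q b k x))
      (nearFieldHDeriv lam ρ t q b k) (q b k) := by
  intro i m
  by_cases hib : i = b
  · subst hib
    have hdist := EuclideanSpace.hasDerivAt_norm_sub_toLp_update (hq m).symm k
    have hentry := (((hdist.const_mul (2 * Real.pi / lam)).ofReal_comp.const_mul Complex.I).cexp
      |>.const_mul (ρ : ℂ))
    simp only [nearFieldHDeriv, nearFieldH, updateAntennaCoord, of_apply, Function.update_self,
      if_true]
    exact hentry.congr_deriv (by simp [mul_assoc])
  · simpa [nearFieldHDeriv, nearFieldH, updateAntennaCoord, hib] using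
      hasDerivAt_const (q b k) (nearFieldH lam ρ t q i m)

theorem hasDerivAtEntrywise_nearFieldA (σ : ℝ) {T : Matrix (Fin Nt) (Fin Nt) ℂ}
    (hT : T.IsHermitian) {b : Fin N} (hq : ∀ m, q b ≠ t m) (k : Fin 3) :
    HasDerivAtEntrywise (fun x => nearFieldA lam ρ σ T t (updateAntennaCoord q b k x))
      (nearFieldHDeriv lam ρ t q b k * T * (nearFieldH lam ρ t q)ᴴ
        + (nearFieldHDeriv lam ρ t q b k * T * (nearFieldH lam ρ t q)ᴴ)ᴴ) (q b k) := by
  have hH := hasDerivAtEntrywise_nearFieldH lam ρ t q hq k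
  have hA := ((hH.mul_const T).mul hH.conjTranspose).add_const (((σ ^ 2 : ℝ) : ℂ) • 1)
  rw [updateAntennaCoord_self] at hA
  rwa [conjTranspose_mul, conjTranspose_mul, conjTranspose_conjTranspose, hT.eq,
    ← Matrix.mul_assoc]

theorem nearFieldA_posDef {σ : ℝ} (hσ : 0 < σ ^ 2) {T : Matrix (Fin Nt) (Fin Nt) ℂ}
    (hT : T.PosSemidef) : (nearFieldA lam ρ σ T t q).PosDef :=
  PosDef.posSemidef_add (hT.mul_mul_conjTranspose_same _)
    (PosDef.one.smul (by exact_mod_cast hσ))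

theorem hasDerivAt_log_det_nearFieldA {σ : ℝ} (hσ : 0 < σ ^ 2)
    {T : Matrix (Fin Nt) (Fin Nt) ℂ} (hT : T.PosSemidef) {b : Fin N} (hq : ∀ m, q b ≠ t m)
    (k : Fin 3) :
    HasDerivAt
      (fun x => Real.log (nearFieldA lam ρ σ T t (updateAntennaCoord q b k x)).det.re)
      (-(4 * Real.pi * ρ / lam) * (∑ m, nearFieldC lam ρ σ T t q m b
        * (((q b k - t m k) / ‖t m - q b‖ : ℝ) : ℂ)
        * Complex.exp (Complex.I * ((2 * Real.pi / lam * ‖t m - q b‖ : ℝ) : ℂ))).im)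
      (q b k) := by
  have hpos := nearFieldA_posDef lam ρ t q hσ hT
  have hlog := (hasDerivAtEntrywise_nearFieldA lam ρ t q σ hT.isHermitian hq k).log_det_re
    (by rwa [updateAntennaCoord_self])
  rw [updateAntennaCoord_self, re_trace_mul_add_conjTranspose hpos.isHermitian.inv,
    Matrix.mul_assoc, Matrix.mul_assoc, ← Matrix.mul_assoc T, ← nearFieldC, nearFieldHDeriv,
    trace_of_ite_mul] at hlog
  refine hlog.congr_deriv ?_
  simp only [Complex.re_sum, Complex.im_sum, Finset.mul_sum, nearFieldH, of_apply]
  refine Finset.sum_congr rfl fun m _ => ?_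
  simp only [Complex.mul_re, Complex.mul_im, Complex.I_re, Complex.I_im, Complex.ofReal_re,
    Complex.ofReal_im]
  ring

end NearField

theorem hasDerivAt_rate_y_coordinate_general {N Nt : ℕ}
    (lam ρ σ : ℝ) (hσ : 0 < σ ^ 2)
    (t : Fin Nt → EuclideanSpace ℝ (Fin 3))
    (q : Fin N → EuclideanSpace ℝ (Fin 3))
    (T1 T2 : Matrix (Fin Nt) (Fin Nt) ℂ)
    (hT1psd : T1.PosSemidef) (hT2psd : T2.PosSemidef)
    (b : Fin N)
    (hq : ∀ m : Fin Nt, q b ≠ t m) :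
    HasDerivAt
      (fun x : ℝ =>
        nearFieldR lam ρ σ T1 T2 t (Function.update q b (WithLp.toLp 2 (Function.update (q b) 1 x))))
      ((4 * Real.pi * ρ / lam) *
        (∑ m : Fin Nt,
          (nearFieldC lam ρ σ T2 t q m b - nearFieldC lam ρ σ T1 t q m b) *
            ((((q b 1 - t m 1) / ‖t m - q b‖ : ℝ)) : ℂ) *
            Complex.exp (Complex.I * ((2 * Real.pi / lam * ‖t m - q b‖ : ℝ) : ℂ))).im)
      (q b 1) := by
  have h1 := hasDerivAt_log_det_nearFieldA lam ρ t q hσ hT1psd hq 1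
  have h2 := hasDerivAt_log_det_nearFieldA lam ρ t q hσ hT2psd hq 1
  refine (h1.sub h2).congr_deriv ?_
  simp only [sub_mul, Finset.sum_sub_distrib, Complex.sub_im]
  ring

/-- **Gradient of the rate with respect to the `y`-coordinate of the `b`-th movable antenna.**
If `q_b ≠ t_m` for all `m`, then the partial derivative of `R` with respect to the
`y`-coordinate `y_b` of `q_b` exists and equals
`(4πρ/λ) · Im( Σ_m [C₂(q)(m,b) − C₁(q)(m,b)] · ((y_b − y_{t,m})/‖t_m − q_b‖) ·
  exp(i(2π/λ)‖t_m − q_b‖) )`. -/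
theorem hasDerivAt_rate_y_coordinate {N Nt : ℕ}
    (lam ρ σ : ℝ) (hlam : 0 < lam) (hρ : 0 < ρ) (hσ : 0 < σ ^ 2)
    (t : Fin Nt → EuclideanSpace ℝ (Fin 3))
    (q : Fin N → EuclideanSpace ℝ (Fin 3))
    (T1 T2 : Matrix (Fin Nt) (Fin Nt) ℂ)
    (hT1 : T1.IsHermitian) (hT2 : T2.IsHermitian)
    (hT1psd : T1.PosSemidef) (hT2psd : T2.PosSemidef)
    (b : Fin N)
    (hq : ∀ m : Fin Nt, q b ≠ t m) :
    HasDerivAt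
      (fun x : ℝ =>
        nearFieldR lam ρ σ T1 T2 t (Function.update q b (WithLp.toLp 2 (Function.update (q b) 1 x))))
      ((4 * Real.pi * ρ / lam) *
        (∑ m : Fin Nt,
          (nearFieldC lam ρ σ T2 t q m b - nearFieldC lam ρ σ T1 t q m b) *
            ((((q b 1 - t m 1) / ‖t m - q b‖ : ℝ)) : ℂ) *
            Complex.exp (Complex.I * ((2 * Real.pi / lam * ‖t m - q b‖ : ℝ) : ℂ))).im)
      (q b 1) :=
  hasDerivAt_rate_y_coordinate_general lam ρ σ hσ t q T1 T2 hT1psd hT2psd b hq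
end

section
/- Let B₀ be an n×n Hermitian positive definite complex matrix, H an n×m complex matrix, and V, V₀ m×m Hermitian positive semidefinite complex matrices. Then ln det(B₀ + H V H^H) ≤ ln det(B₀ + H V₀ H^H) + Re Tr( H^H (B₀ + H V₀ H^H)^{-1} H (V − V₀) ). -/
/-!
`log det` is concave on positive definite matrices, so it lies below its tangent at `A₀`,
whose derivative is `X ↦ Re Tr (A₀⁻¹ X)`. Concretely, write `A₀⁻¹ = Bᴴ B` with `B` invertible:
then `P = B A Bᴴ` is positive definite with `det A = det A₀ · det P` and `Tr P = Tr (A₀⁻¹ A)`,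
and the claim reduces to `log det P ≤ Tr P - n`, i.e. `∑ log λᵢ ≤ ∑ (λᵢ - 1)` over the
eigenvalues of `P`.
-/

open Matrix
open scoped ComplexOrder MatrixOrder

namespace Matrix

variable {n 𝕜 : Type*} [Fintype n] [DecidableEq n] [RCLike 𝕜] {A A₀ : Matrix n n 𝕜}

theorem PosDef.log_re_det_le_re_trace_sub_card (hA : A.PosDef) :
    Real.log (RCLike.re A.det) ≤ RCLike.re A.trace - Fintype.card n := by
  have hpos := hA.eigenvalues_pos
  rw [hA.isHermitian.det_eq_prod_eigenvalues, hA.isHermitian.trace_eq_sum_eigenvalues,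
    ← RCLike.ofReal_prod, ← RCLike.ofReal_sum, RCLike.ofReal_re, RCLike.ofReal_re,
    Real.log_prod fun i _ => (hpos i).ne']
  calc ∑ i, Real.log (hA.isHermitian.eigenvalues i)
      ≤ ∑ i, (hA.isHermitian.eigenvalues i - 1) :=
        Finset.sum_le_sum fun i _ => Real.log_le_sub_one_of_pos (hpos i)
    _ = _ := by simp [Finset.sum_sub_distrib]

theorem PosDef.log_re_det_le_log_re_det_add_re_trace (hA₀ : A₀.PosDef) (hA : A.PosDef) :
    Real.log (RCLike.re A.det) ≤
      Real.log (RCLike.re A₀.det) + RCLike.re (A₀⁻¹ * (A - A₀)).trace := by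
  obtain ⟨B, hB, hA₀inv⟩ :=
    CStarAlgebra.isStrictlyPositive_iff_eq_star_mul_self.mp hA₀.inv.isStrictlyPositive
  have hA₀det : IsUnit A₀.det := (isUnit_iff_isUnit_det _).mp hA₀.isUnit
  have hP : (B * A * star B).PosDef := (IsUnit.posDef_star_right_conjugate_iff hB).mpr hA
  have hdet : A.det = A₀.det * (B * A * star B).det := by
    have : (B * A * star B).det = A₀⁻¹.det * A.det := by
      rw [hA₀inv, det_mul, det_mul, det_mul]; ring
    rw [this, ← mul_assoc, ← det_mul, mul_nonsing_inv _ hA₀det, det_one, one_mul]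
  have htrace : (B * A * star B).trace = (A₀⁻¹ * A).trace := by
    rw [hA₀inv, trace_mul_cycle, mul_assoc]
  obtain ⟨hA₀re, hA₀im⟩ := RCLike.pos_iff.mp hA₀.det_pos
  obtain ⟨hPre, -⟩ := RCLike.pos_iff.mp hP.det_pos
  calc Real.log (RCLike.re A.det)
      = Real.log (RCLike.re A₀.det) + Real.log (RCLike.re (B * A * star B).det) := by
        rw [hdet, RCLike.mul_re, hA₀im, zero_mul, sub_zero, Real.log_mul hA₀re.ne' hPre.ne']
    _ ≤ Real.log (RCLike.re A₀.det) + (RCLike.re (B * A * star B).trace - Fintype.card n) := by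
        gcongr; exact hP.log_re_det_le_re_trace_sub_card
    _ = _ := by
        rw [htrace, Matrix.mul_sub, nonsing_inv_mul _ hA₀det, trace_sub, trace_one, map_sub]
        simp

end Matrix

/-- **First-order Taylor upper bound on the log-det function.**
Let `B₀` be an `n × n` Hermitian positive definite complex matrix, `H` an `n × m` complex
matrix, and `V`, `V₀` be `m × m` Hermitian positive semidefinite complex matrices. Then
`ln det(B₀ + H V Hᴴ) ≤ ln det(B₀ + H V₀ Hᴴ) + Re Tr(Hᴴ (B₀ + H V₀ Hᴴ)⁻¹ H (V − V₀))`. -/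
theorem lndet_first_order_upper_bound {n m : ℕ}
    (B0 : Matrix (Fin n) (Fin n) ℂ) (hB0 : B0.PosDef)
    (H : Matrix (Fin n) (Fin m) ℂ)
    (V V0 : Matrix (Fin m) (Fin m) ℂ)
    (hV : V.PosSemidef) (hV0 : V0.PosSemidef) :
    Real.log ((B0 + H * V * Hᴴ).det.re) ≤
      Real.log ((B0 + H * V0 * Hᴴ).det.re)
        + ((Hᴴ * (B0 + H * V0 * Hᴴ)⁻¹ * H * (V - V0)).trace).re := by
  have hA : (B0 + H * V * Hᴴ).PosDef := hB0.add_posSemidef (hV.mul_mul_conjTranspose_same H)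
  have hA₀ : (B0 + H * V0 * Hᴴ).PosDef := hB0.add_posSemidef (hV0.mul_mul_conjTranspose_same H)
  have htrace : (Hᴴ * (B0 + H * V0 * Hᴴ)⁻¹ * H * (V - V0)).trace =
      ((B0 + H * V0 * Hᴴ)⁻¹ * (B0 + H * V * Hᴴ - (B0 + H * V0 * Hᴴ))).trace := by
    rw [add_sub_add_left_eq_sub, ← Matrix.sub_mul, ← Matrix.mul_sub, Matrix.mul_assoc Hᴴ,
      Matrix.mul_assoc Hᴴ, trace_mul_comm Hᴴ]
    simp only [Matrix.mul_assoc]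
  rw [htrace]
  exact hA₀.log_re_det_le_log_re_det_add_re_trace hA
end
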